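/- arXiv:1508.07258 — 4 statements merged into one kernel-verified Lean document; each statement's English description precedes it below -/
import Mathlib

section
/- If r : ℝ → ℝⁿ (n ≥ 2) is a twice differentiable solution of the central force equation r'' = (F(|r|)/|r|) • r, and at some time t₀ the vectors r(t₀) and r'(t₀) are linearly independent, then for all t the vectors r(t) and r'(t) lie in the fixed 2-dimensional subspace spanned by r(t₀) and r'(t₀). -/
/-!
Let `W` be the subspace spanned by `r t₀` and `r' t₀`. In the quotient by the closed subspace `W`,
the image of `r` solves the same linear equation `y'' = c(t) y`, with `c(t) = F(|r|)/|r|`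
continuous, and has zero initial data at `t₀`. The first-order system `(y, y') ↦ (y', c(t) y)`
is Lipschitz locally uniformly in `t`, so uniqueness of solutions forces `y ≡ 0`, i.e. `r`
and `r'` stay in `W`.
-/

open Set Filter Topology

section

variable {E : Type*} [NormedAddCommGroup E] [NormedSpace ℝ E]

theorem ODE_solution_unique_of_eventually_lipschitzWith {v : ℝ → E → E}
    (hv : ∀ t₀, ∃ K, ∀ᶠ t in 𝓝 t₀, LipschitzWith K (v t))
    {f g : ℝ → E} (hf : ∀ t, HasDerivAt f (v t (f t)) t) (hg : ∀ t, HasDerivAt g (v t (g t)) t)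
    {t₀ : ℝ} (heq : f t₀ = g t₀) : f = g := by
  have hclosed : IsClosed {t | f t = g t} :=
    isClosed_eq (continuous_iff_continuousAt.2 fun t ↦ (hf t).continuousAt)
      (continuous_iff_continuousAt.2 fun t ↦ (hg t).continuousAt)
  have hopen : IsOpen {t | f t = g t} := by
    refine isOpen_iff_mem_nhds.2 fun t₁ (h₁ : f t₁ = g t₁) ↦ ?_
    obtain ⟨K, hK⟩ := hv t₁
    exact ODE_solution_unique_of_eventually (s := fun _ ↦ univ)
      (hK.mono fun _ h ↦ h.lipschitzOnWith) (.of_forall fun t ↦ ⟨hf t, trivial⟩)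
      (.of_forall fun t ↦ ⟨hg t, trivial⟩) h₁
  funext t
  exact eq_univ_iff_forall.1 (IsClopen.eq_univ ⟨hclosed, hopen⟩ ⟨t₀, heq⟩) t

theorem lipschitzWith_snd_smul_fst (c : ℝ) :
    LipschitzWith (max 1 ‖c‖₊) fun p : E × E ↦ (p.2, c • p.1) := by
  simpa using LipschitzWith.prod_snd.prodMk ((lipschitzWith_smul c).comp LipschitzWith.prod_fst)

theorem eq_zero_of_hasDerivAt_smul {c : ℝ → ℝ} (hc : Continuous c) {y z : ℝ → E}
    (hy : ∀ t, HasDerivAt y (z t) t)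
    (hz : ∀ t, HasDerivAt z (c t • y t) t) {t₀ : ℝ} (hy₀ : y t₀ = 0) (hz₀ : z t₀ = 0) (t : ℝ) :
    y t = 0 ∧ z t = 0 := by
  have hlip (t₁ : ℝ) : ∃ K, ∀ᶠ s in 𝓝 t₁, LipschitzWith K fun p : E × E ↦ (p.2, c s • p.1) := by
    refine ⟨max 1 (‖c t₁‖₊ + 1), ?_⟩
    filter_upwards [(hc.nnnorm.tendsto t₁).eventually (gt_mem_nhds (lt_add_one ‖c t₁‖₊))]
      with s hs
    exact (lipschitzWith_snd_smul_fst (c s)).weaken (max_le_max le_rfl hs.le)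
  have := ODE_solution_unique_of_eventually_lipschitzWith hlip
    (f := fun t ↦ (y t, z t)) (g := fun _ ↦ 0) (fun s ↦ (hy s).prodMk (hz s))
    (fun s ↦ (hasDerivAt_const s 0).congr_deriv (by simp [Prod.zero_eq_mk])) (Prod.ext hy₀ hz₀)
  exact Prod.ext_iff.1 (congrFun this t)

theorem mem_of_hasDerivAt_smul (K : Submodule ℝ E) [IsClosed (K : Set E)]
    {c : ℝ → ℝ} (hc : Continuous c) {r v : ℝ → E} (hr : ∀ t, HasDerivAt r (v t) t)
    (hv : ∀ t, HasDerivAt v (c t • r t) t) {t₀ : ℝ} (hr₀ : r t₀ ∈ K) (hv₀ : v t₀ ∈ K) (t : ℝ) :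
    r t ∈ K ∧ v t ∈ K := by
  simp only [← Submodule.Quotient.mk_eq_zero K] at hr₀ hv₀ ⊢
  refine eq_zero_of_hasDerivAt_smul hc (y := K.mkQL ∘ r) (z := K.mkQL ∘ v)
    (fun t ↦ K.mkQL.hasFDerivAt.comp_hasDerivAt t (hr t)) (fun t ↦ ?_) hr₀ hv₀ t
  simpa using K.mkQL.hasFDerivAt.comp_hasDerivAt t (hv t)

end

theorem central_force_motion_planar_general {n : ℕ}
    (F : ℝ → ℝ) (hF : Continuous F)
    (r v : ℝ → EuclideanSpace ℝ (Fin n))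
    (hr : ∀ t, HasDerivAt r (v t) t)
    (hv : ∀ t, HasDerivAt v ((F ‖r t‖ / ‖r t‖) • r t) t)
    (hpos : ∀ t, 0 < ‖r t‖)
    (t₀ : ℝ) :
    ∀ t, r t ∈ Submodule.span ℝ {r t₀, v t₀} ∧
         v t ∈ Submodule.span ℝ {r t₀, v t₀} := by
  have : IsClosed (Submodule.span ℝ {r t₀, v t₀} : Set (EuclideanSpace ℝ (Fin n))) :=
    Submodule.closed_of_finiteDimensional _
  have hnorm : Continuous fun t ↦ ‖r t‖ :=
    (continuous_iff_continuousAt.2 fun t ↦ (hr t).continuousAt).norm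
  exact mem_of_hasDerivAt_smul _ ((hF.comp hnorm).div hnorm fun t ↦ (hpos t).ne') hr hv
    (t₀ := t₀) (Submodule.subset_span (by simp)) (Submodule.subset_span (by simp))

/-- Planarity of central force motion: if `r(t₀)` and `v(t₀)` are linearly
independent, the motion stays in the 2-dimensional subspace they span. -/
theorem central_force_motion_planar {n : ℕ} (hn : 2 ≤ n)
    (F : ℝ → ℝ) (hF : Continuous F)
    (r v : ℝ → EuclideanSpace ℝ (Fin n))
    (hr : ∀ t, HasDerivAt r (v t) t)
    (hv : ∀ t, HasDerivAt v ((F ‖r t‖ / ‖r t‖) • r t) t)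
    (hpos : ∀ t, 0 < ‖r t‖)
    (t₀ : ℝ)
    (hli : LinearIndependent ℝ ![r t₀, v t₀]) :
    ∀ t, r t ∈ Submodule.span ℝ {r t₀, v t₀} ∧
         v t ∈ Submodule.span ℝ {r t₀, v t₀} :=
  central_force_motion_planar_general F hF r v hr hv hpos t₀
end

section
/- For a solution (r(t), θ(t)) of the Kepler polar equations with k > 0, L = θ' r² ≠ 0, and energy E with k² - 2|E|L² > 0 when E < 0, the quantity Θ = θ + arctan((L² - k r)/(L r' r)) is constant in time on any interval where r' ≠ 0. -/
/-!
Write `Θ = θ + arctan (u / v)` with `u = L² - k r` and `v = L r' r`. Eliminating `θ'` and `r''`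
through `θ' = L / r²` and `r'' = L² / r³ - k / r²` gives the identity
`u' v - u v' = -(L / r²) (u² + v²)`, so the arctan term has derivative `-L / r² = -θ'` and `Θ' = 0`.
-/

open Real Set

theorem HasDerivAt.arctan_div {u v : ℝ → ℝ} {u' v' t : ℝ} (hu : HasDerivAt u u' t)
    (hv : HasDerivAt v v' t) (hv0 : v t ≠ 0) :
    HasDerivAt (fun s => Real.arctan (u s / v s)) ((u' * v t - u t * v') / (u t ^ 2 + v t ^ 2)) t := by
  refine (hu.div hv hv0).arctan.congr_deriv ?_
  simp only [Pi.div_apply]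
  field_simp
  ring

theorem hasDerivAt_arctan_kepler {r r' : ℝ → ℝ} {k L t : ℝ} (hr : HasDerivAt r (r' t) t)
    (hr' : HasDerivAt r' (L ^ 2 / r t ^ 3 - k / r t ^ 2) t) (hL : L ≠ 0) (hr0 : r t ≠ 0)
    (hr'0 : r' t ≠ 0) :
    HasDerivAt (fun s => arctan ((L ^ 2 - k * r s) / (L * r' s * r s))) (-(L / r t ^ 2)) t := by
  have hu : HasDerivAt (fun s => L ^ 2 - k * r s) (-(k * r' t)) t :=
    (hr.const_mul k).const_sub (L ^ 2)
  have hv : HasDerivAt (fun s => L * r' s * r s)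
      (L * (L ^ 2 / r t ^ 3 - k / r t ^ 2) * r t + L * r' t * r' t) t :=
    (hr'.const_mul L).mul hr
  have hv0 : L * r' t * r t ≠ 0 := by positivity
  convert hu.arctan_div hv hv0 using 1
  field_simp
  ring

theorem kepler_angular_quantity_constant_general (k a b L : ℝ) (hL : L ≠ 0)
    (r θ : ℝ → ℝ) (hrC : ContDiff ℝ 2 r) (hθC : ContDiff ℝ 2 θ)
    (hrpos : ∀ t ∈ Set.Ioo a b, 0 < r t)
    (hrv : ∀ t ∈ Set.Ioo a b, deriv r t ≠ 0)
    (heom1 : ∀ t ∈ Set.Ioo a b,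
      deriv (deriv r) t = r t * (deriv θ t) ^ 2 - k / (r t) ^ 2)
    (hLdef : ∀ t ∈ Set.Ioo a b, deriv θ t * (r t) ^ 2 = L) :
    ∀ t₁ ∈ Set.Ioo a b, ∀ t₂ ∈ Set.Ioo a b,
      θ t₁ + Real.arctan ((L ^ 2 - k * r t₁) / (L * deriv r t₁ * r t₁))
      = θ t₂ + Real.arctan ((L ^ 2 - k * r t₂) / (L * deriv r t₂ * r t₂)) := by
  have hr : Differentiable ℝ r := hrC.differentiable (by norm_num)
  have hr' : Differentiable ℝ (deriv r) := hrC.differentiable_deriv_two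
  have hθ : Differentiable ℝ θ := hθC.differentiable (by norm_num)
  have hΘ : ∀ t ∈ Ioo a b, HasDerivAt
      (fun s => θ s + arctan ((L ^ 2 - k * r s) / (L * deriv r s * r s))) 0 t := by
    intro t ht
    have hr0 := (hrpos t ht).ne'
    have hθ' : deriv θ t = L / r t ^ 2 := by
      rw [← hLdef t ht]
      field_simp
    have hr₂ : deriv (deriv r) t = L ^ 2 / r t ^ 3 - k / r t ^ 2 := by
      rw [heom1 t ht, hθ']
      field_simp
    have hadd := (hθ t).hasDerivAt.add (hasDerivAt_arctan_kepler (hr t).hasDerivAt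
      (hr₂ ▸ (hr' t).hasDerivAt) hL hr0 (hrv t ht))
    rwa [hθ', add_neg_cancel] at hadd
  intro t₁ ht₁ t₂ ht₂
  exact isOpen_Ioo.is_const_of_deriv_eq_zero isPreconnected_Ioo
    (fun t ht => (hΘ t ht).differentiableAt.differentiableWithinAt)
    (fun t ht => (hΘ t ht).deriv) ht₁ ht₂

/-- For the Kepler problem, `Θ = θ + arctan((L² - kr)/(L r' r))` is constant on
any interval where `r' ≠ 0`. -/
theorem kepler_angular_quantity_constant (k a b L E : ℝ) (hk : 0 < k) (hL : L ≠ 0)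
    (r θ : ℝ → ℝ) (hrC : ContDiff ℝ 2 r) (hθC : ContDiff ℝ 2 θ)
    (hrpos : ∀ t ∈ Set.Ioo a b, 0 < r t)
    (hrv : ∀ t ∈ Set.Ioo a b, deriv r t ≠ 0)
    (heom1 : ∀ t ∈ Set.Ioo a b,
      deriv (deriv r) t = r t * (deriv θ t) ^ 2 - k / (r t) ^ 2)
    (heom2 : ∀ t ∈ Set.Ioo a b,
      deriv (deriv θ) t = -2 * deriv θ t * deriv r t / r t)
    (hLdef : ∀ t ∈ Set.Ioo a b, deriv θ t * (r t) ^ 2 = L)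
    (hEdef : ∀ t ∈ Set.Ioo a b,
      (deriv r t) ^ 2 / 2 + L ^ 2 / (2 * (r t) ^ 2) - k / r t = E)
    (hEneg : E < 0 → 0 < k ^ 2 - 2 * |E| * L ^ 2) :
    ∀ t₁ ∈ Set.Ioo a b, ∀ t₂ ∈ Set.Ioo a b,
      θ t₁ + Real.arctan ((L ^ 2 - k * r t₁) / (L * deriv r t₁ * r t₁))
      = θ t₂ + Real.arctan ((L ^ 2 - k * r t₂) / (L * deriv r t₂ * r t₂)) :=
  kepler_angular_quantity_constant_general k a b L hL r θ hrC hθC hrpos hrv heom1 hLdef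
end

section
/- For a C² solution r⃗ : ℝ → ℝ³ of the Kepler equation, Hamilton's eccentricity vector e⃗ = v⃗ + (k/(|L⃗|² |r⃗|)) r⃗ × L⃗ is constant in time, where L⃗ = r⃗ × v⃗ ≠ 0. -/
/-- Cross product on `EuclideanSpace ℝ (Fin 3)`. -/
noncomputable def cross3 (a b : EuclideanSpace ℝ (Fin 3)) : EuclideanSpace ℝ (Fin 3) :=
  (WithLp.equiv 2 (Fin 3 → ℝ)).symm
    ![a 1 * b 2 - a 2 * b 1, a 2 * b 0 - a 0 * b 2, a 0 * b 1 - a 1 * b 0]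

lemma cross3_apply0 (a b : EuclideanSpace ℝ (Fin 3)) :
    cross3 a b 0 = a 1 * b 2 - a 2 * b 1 := rfl
lemma cross3_apply1 (a b : EuclideanSpace ℝ (Fin 3)) :
    cross3 a b 1 = a 2 * b 0 - a 0 * b 2 := rfl
lemma cross3_apply2 (a b : EuclideanSpace ℝ (Fin 3)) :
    cross3 a b 2 = a 0 * b 1 - a 1 * b 0 := rfl

lemma norm3_eq (x : EuclideanSpace ℝ (Fin 3)) :
    ‖x‖ = Real.sqrt (x 0 ^ 2 + x 1 ^ 2 + x 2 ^ 2) := by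
  simp [EuclideanSpace.norm_eq, Fin.sum_univ_three, sq_abs]

lemma hamAux (k : ℝ) (x y z vx vy vz : ℝ → ℝ) (la lb lc lsq : ℝ)
    (hx : ∀ t, HasDerivAt x (vx t) t)
    (hy : ∀ t, HasDerivAt y (vy t) t)
    (hz : ∀ t, HasDerivAt z (vz t) t)
    (hvx : ∀ t, HasDerivAt vx
      (-(k / Real.sqrt (x t ^ 2 + y t ^ 2 + z t ^ 2) ^ 3) * x t) t)
    (hpos : ∀ t, 0 < x t ^ 2 + y t ^ 2 + z t ^ 2)
    (hla : ∀ t, la = y t * vz t - z t * vy t)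
    (hlb : ∀ t, lb = z t * vx t - x t * vz t)
    (hlc : ∀ t, lc = x t * vy t - y t * vx t)
    (hlsq : lsq = la ^ 2 + lb ^ 2 + lc ^ 2)
    (hlsq0 : lsq ≠ 0) :
    ∀ t s : ℝ,
      vx t + k / lsq * ((y t * lc - z t * lb) * (Real.sqrt (x t ^ 2 + y t ^ 2 + z t ^ 2))⁻¹)
      = vx s + k / lsq * ((y s * lc - z s * lb) * (Real.sqrt (x s ^ 2 + y s ^ 2 + z s ^ 2))⁻¹) := by
  have hd : ∀ u, HasDerivAt (fun t =>
      vx t + k / lsq * ((y t * lc - z t * lb) * (Real.sqrt (x t ^ 2 + y t ^ 2 + z t ^ 2))⁻¹)) 0 u := by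
    intro u
    have hq : (0:ℝ) < Real.sqrt (x u ^ 2 + y u ^ 2 + z u ^ 2) := Real.sqrt_pos.2 (hpos u)
    have hρ : HasDerivAt (fun t => x t ^ 2 + y t ^ 2 + z t ^ 2)
        (2 * (x u * vx u + y u * vy u + z u * vz u)) u := by
      have := (((hx u).mul (hx u)).add ((hy u).mul (hy u))).add ((hz u).mul (hz u))
      convert this using 1
      · rfl
      · rfl
      · ext t; simp only [Pi.add_apply, Pi.mul_apply]; ring
      · ring
    have hs := hρ.sqrt (hpos u).ne'
    have hinv := hs.inv hq.ne'
    have hw : HasDerivAt (fun t => y t * lc - z t * lb) (vy u * lc - vz u * lb) u :=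
      ((hy u).mul_const lc).sub ((hz u).mul_const lb)
    have := (hvx u).add ((hw.mul hinv).const_mul (k / lsq))
    convert this using 1
    · rfl
    · rfl
    · rfl
    set q := Real.sqrt (x u ^ 2 + y u ^ 2 + z u ^ 2) with hqdef
    have hq2 : q ^ 2 = x u ^ 2 + y u ^ 2 + z u ^ 2 := Real.sq_sqrt (hpos u).le
    have key : lsq * x u = (vy u * lc - vz u * lb) * q ^ 2
        - (x u * vx u + y u * vy u + z u * vz u) * (y u * lc - z u * lb) := by
      rw [hlsq, hla u, hlb u, hlc u, hq2]; ring
    have h1 : -(k / q ^ 3) * x u +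
        k / lsq * ((vy u * lc - vz u * lb) * q⁻¹ +
          (y u * lc - z u * lb) * (-(2 * (x u * vx u + y u * vy u + z u * vz u) / (2 * q)) / q ^ 2))
        = k / (lsq * q ^ 3) * ((vy u * lc - vz u * lb) * q ^ 2
          - (x u * vx u + y u * vy u + z u * vz u) * (y u * lc - z u * lb) - lsq * x u) := by
      field_simp
      ring
    simp only [Pi.inv_apply]
    rw [← hqdef]
    rw [h1, ← key]
    ring
  intro t s
  exact is_const_of_deriv_eq_zero (fun u => (hd u).differentiableAt)
    (fun u => (hd u).deriv) t s

/-- Hamilton's eccentricity vector `e⃗ = v⃗ + (k/(|L⃗|²|r⃗|)) r⃗ × L⃗` is constant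
along Kepler solutions. -/
theorem hamilton_eccentricity_vector_constant (k : ℝ)
    (r v : ℝ → EuclideanSpace ℝ (Fin 3))
    (hr : ∀ t, HasDerivAt r (v t) t)
    (hv : ∀ t, HasDerivAt v (-(k / ‖r t‖ ^ 3) • r t) t)
    (hpos : ∀ t, 0 < ‖r t‖)
    (hL : ∀ t, cross3 (r t) (v t) ≠ 0) :
    ∀ t s : ℝ,
      v t + (k / (‖cross3 (r t) (v t)‖ ^ 2 * ‖r t‖)) •
        cross3 (r t) (cross3 (r t) (v t))
      = v s + (k / (‖cross3 (r s) (v s)‖ ^ 2 * ‖r s‖)) •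
        cross3 (r s) (cross3 (r s) (v s)) := by
  have hri : ∀ (i : Fin 3) t, HasDerivAt (fun t => r t i) (v t i) t := fun i t => by
    have := (EuclideanSpace.proj i).hasFDerivAt.comp_hasDerivAt t (hr t)
    simp at this
    exact this
  have hvi : ∀ (i : Fin 3) t, HasDerivAt (fun t => v t i) (-(k / ‖r t‖ ^ 3) * r t i) t :=
    fun i t => by
    have := (EuclideanSpace.proj i).hasFDerivAt.comp_hasDerivAt t (hv t)
    simp at this
    rw [neg_mul]
    exact this
  have hpos3 : ∀ t, 0 < r t 0 ^ 2 + r t 1 ^ 2 + r t 2 ^ 2 := fun t => by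
    have := hpos t
    rw [norm3_eq] at this
    nlinarith [Real.sq_sqrt (by positivity : (0:ℝ) ≤ r t 0 ^ 2 + r t 1 ^ 2 + r t 2 ^ 2),
      Real.sqrt_nonneg (r t 0 ^ 2 + r t 1 ^ 2 + r t 2 ^ 2)]
  -- constancy of angular momentum components
  have hLc : ∀ (a b : Fin 3) (t s : ℝ),
      r t a * v t b - r t b * v t a = r s a * v s b - r s b * v s a := by
    intro a b
    have hd : ∀ u, HasDerivAt (fun t => r t a * v t b - r t b * v t a) 0 u := fun u => by
      have := ((hri a u).mul (hvi b u)).sub ((hri b u).mul (hvi a u))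
      convert this using 1
      · rfl
      · rfl
      · rfl
      ring
    exact fun t s => is_const_of_deriv_eq_zero (fun u => (hd u).differentiableAt)
      (fun u => (hd u).deriv) t s
  have ext3 : ∀ x y : EuclideanSpace ℝ (Fin 3),
      x 0 = y 0 → x 1 = y 1 → x 2 = y 2 → x = y := by
    intro x y h0 h1 h2
    ext i
    fin_cases i <;> assumption
  intro t s
  have hLvec : ∀ u, cross3 (r u) (v u) = cross3 (r s) (v s) := by
    intro u
    refine ext3 _ _ ?_ ?_ ?_
    · exact hLc 1 2 u s
    · exact hLc 2 0 u s
    · exact hLc 0 1 u s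
  have hnorm : ∀ u, ‖r u‖ = Real.sqrt (r u 0 ^ 2 + r u 1 ^ 2 + r u 2 ^ 2) := fun u => norm3_eq _
  have hns : ‖cross3 (r s) (v s)‖ ^ 2 = (r s 1 * v s 2 - r s 2 * v s 1) ^ 2
      + (r s 2 * v s 0 - r s 0 * v s 2) ^ 2 + (r s 0 * v s 1 - r s 1 * v s 0) ^ 2 := by
    rw [norm3_eq, Real.sq_sqrt (by positivity), cross3_apply0, cross3_apply1, cross3_apply2]
  have hns0 : ‖cross3 (r s) (v s)‖ ^ 2 ≠ 0 :=
    pow_ne_zero 2 (norm_ne_zero_iff.2 (hL s))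
  have hla : ∀ u, r s 1 * v s 2 - r s 2 * v s 1 = r u 1 * v u 2 - r u 2 * v u 1 :=
    fun u => (hLc 1 2 u s).symm
  have hlb : ∀ u, r s 2 * v s 0 - r s 0 * v s 2 = r u 2 * v u 0 - r u 0 * v u 2 :=
    fun u => (hLc 2 0 u s).symm
  have hlc : ∀ u, r s 0 * v s 1 - r s 1 * v s 0 = r u 0 * v u 1 - r u 1 * v u 0 :=
    fun u => (hLc 0 1 u s).symm
  refine ext3 _ _ ?_ ?_ ?_ <;>
    rw [hLvec t] <;>
    simp only [PiLp.add_apply, PiLp.smul_apply, smul_eq_mul,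
      cross3_apply0, cross3_apply1, cross3_apply2] <;>
    rw [hnorm t, hnorm s]
  · -- component 0 : (x,y,z) = (r0,r1,r2)
    have H := hamAux k (fun u => r u 0) (fun u => r u 1) (fun u => r u 2)
      (fun u => v u 0) (fun u => v u 1) (fun u => v u 2)
      (r s 1 * v s 2 - r s 2 * v s 1) (r s 2 * v s 0 - r s 0 * v s 2)
      (r s 0 * v s 1 - r s 1 * v s 0)
      (‖cross3 (r s) (v s)‖ ^ 2)
      (hri 0) (hri 1) (hri 2)
      (fun u => by simpa [hnorm u] using hvi 0 u)
      hpos3 hla hlb hlc hns hns0 t s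
    have hqt : Real.sqrt (r t 0 ^ 2 + r t 1 ^ 2 + r t 2 ^ 2) ≠ 0 :=
      (Real.sqrt_pos.2 (hpos3 t)).ne'
    have hqs : Real.sqrt (r s 0 ^ 2 + r s 1 ^ 2 + r s 2 ^ 2) ≠ 0 :=
      (Real.sqrt_pos.2 (hpos3 s)).ne'
    field_simp at H ⊢
    linear_combination H
  · -- component 1 : (x,y,z) = (r1,r2,r0)
    have H := hamAux k (fun u => r u 1) (fun u => r u 2) (fun u => r u 0)
      (fun u => v u 1) (fun u => v u 2) (fun u => v u 0)
      (r s 2 * v s 0 - r s 0 * v s 2) (r s 0 * v s 1 - r s 1 * v s 0)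
      (r s 1 * v s 2 - r s 2 * v s 1)
      (‖cross3 (r s) (v s)‖ ^ 2)
      (hri 1) (hri 2) (hri 0)
      (fun u => by
        have h := hvi 1 u
        rw [hnorm u, show r u 0 ^ 2 + r u 1 ^ 2 + r u 2 ^ 2
          = r u 1 ^ 2 + r u 2 ^ 2 + r u 0 ^ 2 from by ring] at h
        exact h)
      (fun u => by have := hpos3 u; linarith)
      hlb hlc hla (by rw [hns]; ring) hns0 t s
    rw [show r t 1 ^ 2 + r t 2 ^ 2 + r t 0 ^ 2 = r t 0 ^ 2 + r t 1 ^ 2 + r t 2 ^ 2 from by ring,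
      show r s 1 ^ 2 + r s 2 ^ 2 + r s 0 ^ 2 = r s 0 ^ 2 + r s 1 ^ 2 + r s 2 ^ 2 from by ring] at H
    have hqt : Real.sqrt (r t 0 ^ 2 + r t 1 ^ 2 + r t 2 ^ 2) ≠ 0 :=
      (Real.sqrt_pos.2 (hpos3 t)).ne'
    have hqs : Real.sqrt (r s 0 ^ 2 + r s 1 ^ 2 + r s 2 ^ 2) ≠ 0 :=
      (Real.sqrt_pos.2 (hpos3 s)).ne'
    field_simp at H ⊢
    linear_combination H
  · -- component 2 : (x,y,z) = (r2,r0,r1)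
    have H := hamAux k (fun u => r u 2) (fun u => r u 0) (fun u => r u 1)
      (fun u => v u 2) (fun u => v u 0) (fun u => v u 1)
      (r s 0 * v s 1 - r s 1 * v s 0) (r s 1 * v s 2 - r s 2 * v s 1)
      (r s 2 * v s 0 - r s 0 * v s 2)
      (‖cross3 (r s) (v s)‖ ^ 2)
      (hri 2) (hri 0) (hri 1)
      (fun u => by
        have h := hvi 2 u
        rw [hnorm u, show r u 0 ^ 2 + r u 1 ^ 2 + r u 2 ^ 2
          = r u 2 ^ 2 + r u 0 ^ 2 + r u 1 ^ 2 from by ring] at h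
        exact h)
      (fun u => by have := hpos3 u; linarith)
      hlc hla hlb (by rw [hns]; ring) hns0 t s
    rw [show r t 2 ^ 2 + r t 0 ^ 2 + r t 1 ^ 2 = r t 0 ^ 2 + r t 1 ^ 2 + r t 2 ^ 2 from by ring,
      show r s 2 ^ 2 + r s 0 ^ 2 + r s 1 ^ 2 = r s 0 ^ 2 + r s 1 ^ 2 + r s 2 ^ 2 from by ring] at H
    have hqt : Real.sqrt (r t 0 ^ 2 + r t 1 ^ 2 + r t 2 ^ 2) ≠ 0 :=
      (Real.sqrt_pos.2 (hpos3 t)).ne'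
    have hqs : Real.sqrt (r s 0 ^ 2 + r s 1 ^ 2 + r s 2 ^ 2) ≠ 0 :=
      (Real.sqrt_pos.2 (hpos3 s)).ne'
    field_simp at H ⊢
    linear_combination H
end

section
/- For the Newtonian revolving orbit problem with k > 0, 0 < κ < L², and energy -k²/(2(L²-κ)) < E < 0, the quantity Θ = θ + (L/sqrt(L²-κ))·arctan((L² - κ - kr)/(r r' sqrt(L²-κ))) is constant in time along solutions of the polar equations r'' = r(θ')² - k/r² - κ/r³, θ'' = -2θ'r'/r, on any interval where r' ≠ 0. -/
/-!
Write `A = L² - κ` and `u = (A - k r) / (r r' √A)`. Eliminating `θ' = L / r²` from the radial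
equation gives `r'' = A / r³ - k / r²`, and with it the quotient rule collapses to
`u' / (1 + u²) = -√A / r²`. Hence the arctan term of `Θ` has derivative `-L / r²`, which cancels `θ'`.
-/

open Real Set

noncomputable def orbitPhase (k A L : ℝ) (r v θ : ℝ → ℝ) (t : ℝ) : ℝ :=
  θ t + L / √A * arctan ((A - k * r t) / (r t * v t * √A))

lemma hasDerivAt_arctan_orbitPhase {k A a t : ℝ} {r v : ℝ → ℝ} (hA : 0 < A)
    (hr : HasDerivAt r (v t) t) (hv : HasDerivAt v a t) (hr0 : r t ≠ 0) (hv0 : v t ≠ 0)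
    (hacc : a = A / r t ^ 3 - k / r t ^ 2) :
    HasDerivAt (fun t => arctan ((A - k * r t) / (r t * v t * √A))) (-√A / r t ^ 2) t := by
  have hs : 0 < √A := sqrt_pos.mpr hA
  have hs2 : √A ^ 2 = A := sq_sqrt hA.le
  have hden : r t * v t * √A ≠ 0 := by positivity
  have hu : HasDerivAt (fun t => (A - k * r t) / (r t * v t * √A)) _ t :=
    ((hr.const_mul k).const_sub A).div ((hr.mul hv).mul_const √A) hden
  convert hu.arctan using 1
  rw [hacc]
  field_simp
  linear_combination (-(r t ^ 2 * v t ^ 2)) * hs2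

lemma hasDerivAt_orbitPhase {k A L a t : ℝ} {r v θ : ℝ → ℝ} (hA : 0 < A)
    (hr : HasDerivAt r (v t) t) (hv : HasDerivAt v a t) (hθ : HasDerivAt θ (L / r t ^ 2) t)
    (hr0 : r t ≠ 0) (hv0 : v t ≠ 0) (hacc : a = A / r t ^ 3 - k / r t ^ 2) :
    HasDerivAt (orbitPhase k A L r v θ) 0 t := by
  have hs : √A ≠ 0 := (sqrt_pos.mpr hA).ne'
  have h : HasDerivAt (orbitPhase k A L r v θ) (L / r t ^ 2 + L / √A * (-√A / r t ^ 2)) t :=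
    hθ.add ((hasDerivAt_arctan_orbitPhase hA hr hv hr0 hv0 hacc).const_mul (L / √A))
  convert h using 1
  field_simp
  ring

theorem revolving_orbit_angular_quantity_constant_general (k κ a b L : ℝ) (hκL : κ < L ^ 2)
    (r θ : ℝ → ℝ) (hrC : ContDiff ℝ 2 r) (hθC : ContDiff ℝ 2 θ)
    (hrpos : ∀ t ∈ Set.Ioo a b, 0 < r t)
    (hrv : ∀ t ∈ Set.Ioo a b, deriv r t ≠ 0)
    (heom1 : ∀ t ∈ Set.Ioo a b,
      deriv (deriv r) t = r t * (deriv θ t) ^ 2 - k / (r t) ^ 2 - κ / (r t) ^ 3)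
    (hLdef : ∀ t ∈ Set.Ioo a b, deriv θ t * (r t) ^ 2 = L) :
    ∀ t₁ ∈ Set.Ioo a b, ∀ t₂ ∈ Set.Ioo a b,
      θ t₁ + (L / Real.sqrt (L ^ 2 - κ)) *
        Real.arctan ((L ^ 2 - κ - k * r t₁) / (r t₁ * deriv r t₁ * Real.sqrt (L ^ 2 - κ)))
      = θ t₂ + (L / Real.sqrt (L ^ 2 - κ)) *
        Real.arctan ((L ^ 2 - κ - k * r t₂) / (r t₂ * deriv r t₂ * Real.sqrt (L ^ 2 - κ))) := by
  have hA : 0 < L ^ 2 - κ := sub_pos.mpr hκL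
  have hphase : ∀ t ∈ Ioo a b, HasDerivAt (orbitPhase k (L ^ 2 - κ) L r (deriv r) θ) 0 t := by
    intro t ht
    have hr0 : r t ≠ 0 := (hrpos t ht).ne'
    have hθ' : deriv θ t = L / r t ^ 2 := by
      rw [← hLdef t ht]; field_simp
    refine hasDerivAt_orbitPhase hA (hrC.differentiable two_ne_zero t).hasDerivAt
      (hrC.differentiable_deriv_two t).hasDerivAt ?_ hr0 (hrv t ht) ?_
    · exact hθ' ▸ (hθC.differentiable two_ne_zero t).hasDerivAt
    · rw [heom1 t ht, hθ']; field_simp; ring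
  intro t₁ ht₁ t₂ ht₂
  exact isOpen_Ioo.is_const_of_deriv_eq_zero isPreconnected_Ioo
    (fun t ht => (hphase t ht).differentiableAt.differentiableWithinAt)
    (fun t ht => (hphase t ht).deriv) ht₁ ht₂

/-- For the Newtonian revolving orbit problem, the angular quantity
`Θ = θ + (L/√(L²-κ)) arctan((L² - κ - kr)/(r r' √(L²-κ)))` is constant
on any interval where `r' ≠ 0`. -/
theorem revolving_orbit_angular_quantity_constant (k κ a b L E : ℝ)
    (hk : 0 < k) (hκ : 0 < κ) (hκL : κ < L ^ 2)
    (r θ : ℝ → ℝ) (hrC : ContDiff ℝ 2 r) (hθC : ContDiff ℝ 2 θ)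
    (hrpos : ∀ t ∈ Set.Ioo a b, 0 < r t)
    (hrv : ∀ t ∈ Set.Ioo a b, deriv r t ≠ 0)
    (heom1 : ∀ t ∈ Set.Ioo a b,
      deriv (deriv r) t = r t * (deriv θ t) ^ 2 - k / (r t) ^ 2 - κ / (r t) ^ 3)
    (heom2 : ∀ t ∈ Set.Ioo a b,
      deriv (deriv θ) t = -2 * deriv θ t * deriv r t / r t)
    (hLdef : ∀ t ∈ Set.Ioo a b, deriv θ t * (r t) ^ 2 = L)
    (hEdef : ∀ t ∈ Set.Ioo a b,
      (deriv r t) ^ 2 / 2 + (L ^ 2 - κ) / (2 * (r t) ^ 2) - k / r t = E)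
    (hE1 : -k ^ 2 / (2 * (L ^ 2 - κ)) < E) (hE2 : E < 0) :
    ∀ t₁ ∈ Set.Ioo a b, ∀ t₂ ∈ Set.Ioo a b,
      θ t₁ + (L / Real.sqrt (L ^ 2 - κ)) *
        Real.arctan ((L ^ 2 - κ - k * r t₁) / (r t₁ * deriv r t₁ * Real.sqrt (L ^ 2 - κ)))
      = θ t₂ + (L / Real.sqrt (L ^ 2 - κ)) *
        Real.arctan ((L ^ 2 - κ - k * r t₂) / (r t₂ * deriv r t₂ * Real.sqrt (L ^ 2 - κ))) :=
  revolving_orbit_angular_quantity_constant_general k κ a b L hκL r θ hrC hθC hrpos hrv heom1 hLdef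
end
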